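/- arXiv:2604.00040 — 2 statements merged into one kernel-verified Lean document; each statement's English description precedes it below -/
import Mathlib

section
/- The characteristic polynomial of the (p+q)×(p+q) block matrix M = [[I_p, J_{p×q}], [J_{q×p}, 0_q]] (where I_p is the p×p identity, J denotes all-ones blocks, and 0_q is the q×q zero matrix) is det(μI − M) = μ^{q−1}(μ−1)^{p−1}(μ² − μ − pq). -/
open Polynomial Matrix

lemma det_aux {K : Type*} [Field K] (n : ℕ) (hn : 1 ≤ n) (a b : K) (ha : a ≠ 0) :
    ((a • 1 + b • Matrix.of (fun _ _ => (1:K))) : Matrix (Fin n) (Fin n) K).det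
      = a ^ (n - 1) * (a + n * b) := by
  have h : ((a • 1 + b • Matrix.of (fun _ _ => (1:K))) : Matrix (Fin n) (Fin n) K)
      = a • (1 + Matrix.replicateCol (Fin 1) (fun _ => b / a) * Matrix.replicateRow (Fin 1) (fun _ => (1:K))) := by
    ext i j
    simp only [Matrix.add_apply, Matrix.smul_apply, Matrix.mul_apply, Matrix.replicateCol_apply,
      Matrix.replicateRow_apply, Matrix.of_apply, Finset.sum_const, Finset.card_univ, Fintype.card_fin,
      one_smul, smul_eq_mul, mul_one]
    by_cases hij : i = j <;> simp [hij, Matrix.one_apply] <;> field_simp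
  rw [h, Matrix.det_smul]
  erw [Matrix.det_one_add_replicateCol_mul_replicateRow (ι := Fin 1)]
  simp only [dotProduct, Finset.sum_const, Finset.card_univ, Fintype.card_fin,
    smul_eq_mul, mul_one]
  have hpow : a ^ n = a ^ (n - 1) * a := by
    conv_lhs => rw [← Nat.sub_add_cancel hn, pow_succ]
  rw [hpow]
  field_simp
  rw [nsmul_eq_mul, mul_add, mul_one, mul_left_comm, mul_div_cancel₀ b ha, mul_comm b]

/-- The block matrix `M = [[I_p, J_{p×q}], [J_{q×p}, 0_q]]`. -/
noncomputable def splitM (p q : ℕ) : Matrix (Fin p ⊕ Fin q) (Fin p ⊕ Fin q) ℝ :=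
  Matrix.fromBlocks 1 (Matrix.of fun _ _ => 1) (Matrix.of fun _ _ => 1) 0

set_option maxHeartbeats 1000000 in
set_option synthInstance.maxHeartbeats 1000000 in
theorem charpoly_splitM (p q : ℕ) (hp : 1 ≤ p) (hq : 1 ≤ q) :
    (splitM p q).charpoly =
      X ^ (q - 1) * (X - 1) ^ (p - 1) * (X ^ 2 - X - C ((p : ℝ) * q)) := by
  have hinj := RatFunc.algebraMap_injective ℝ
  apply hinj
  let f : ℝ[X] →+* RatFunc ℝ := algebraMap ℝ[X] (RatFunc ℝ)
  show f _ = f _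
  have htne : f X ≠ 0 := by
    rw [map_ne_zero_iff f hinj]; exact X_ne_zero
  have ht1 : f X - 1 ≠ 0 := by
    rw [← map_one f, ← map_sub, map_ne_zero_iff f hinj]
    simpa using X_sub_C_ne_zero (1:ℝ)
  let B : Matrix (Fin p) (Fin q) (RatFunc ℝ) := Matrix.of fun _ _ => -1
  let Cm : Matrix (Fin q) (Fin p) (RatFunc ℝ) := Matrix.of fun _ _ => -1
  rw [Matrix.charpoly, f.map_det, RingHom.mapMatrix_apply]
  have hmap : (Matrix.charmatrix (splitM p q)).map f =
      Matrix.fromBlocks ((f X - 1) • (1 : Matrix (Fin p) (Fin p) (RatFunc ℝ))) B Cm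
        ((f X) • (1 : Matrix (Fin q) (Fin q) (RatFunc ℝ))) := by
    ext i j
    rcases i with i | i <;> rcases j with j | j
    · by_cases hij : i = j <;>
        simp [splitM, Matrix.charmatrix, hij, Matrix.one_apply, B, Cm, Matrix.map_apply]
    · simp [splitM, Matrix.charmatrix, Matrix.one_apply, B, Cm, Matrix.map_apply]
    · simp [splitM, Matrix.charmatrix, Matrix.one_apply, B, Cm, Matrix.map_apply]
    · by_cases hij : i = j <;>
        simp [splitM, Matrix.charmatrix, hij, Matrix.one_apply, B, Cm, Matrix.map_apply]
  rw [hmap]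
  haveI : Invertible ((f X) • (1 : Matrix (Fin q) (Fin q) (RatFunc ℝ))) := by
    apply invertibleOfRightInverse _ ((f X)⁻¹ • (1 : Matrix (Fin q) (Fin q) (RatFunc ℝ)))
    rw [Matrix.smul_mul, Matrix.mul_smul, smul_smul, Matrix.one_mul,
      mul_inv_cancel₀ htne, one_smul]
  have hinvof : ⅟((f X) • (1 : Matrix (Fin q) (Fin q) (RatFunc ℝ)))
      = (f X)⁻¹ • (1 : Matrix (Fin q) (Fin q) (RatFunc ℝ)) := by
    apply invOf_eq_right_inv
    rw [Matrix.smul_mul, Matrix.mul_smul, smul_smul, Matrix.one_mul,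
      mul_inv_cancel₀ htne, one_smul]
  rw [Matrix.det_fromBlocks₂₂, hinvof]
  have hBC : B * ((f X)⁻¹ • (1 : Matrix (Fin q) (Fin q) (RatFunc ℝ))) * Cm
      = ((q : RatFunc ℝ) * (f X)⁻¹) • Matrix.of (fun _ _ => (1 : RatFunc ℝ)) := by
    rw [Matrix.mul_smul, Matrix.mul_one, Matrix.smul_mul]
    ext i j
    simp [B, Cm, Matrix.mul_apply]
    ring
  rw [hBC]
  have hA : (f X - 1) • (1 : Matrix (Fin p) (Fin p) (RatFunc ℝ)) -
      ((q : RatFunc ℝ) * (f X)⁻¹) • Matrix.of (fun _ _ => (1 : RatFunc ℝ)) =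
      (f X - 1) • (1 : Matrix (Fin p) (Fin p) (RatFunc ℝ))
        + (-((q : RatFunc ℝ) * (f X)⁻¹)) • Matrix.of (fun _ _ => (1 : RatFunc ℝ)) := by
    rw [sub_eq_add_neg, neg_smul]
  rw [hA, det_aux p hp _ _ ht1, Matrix.det_smul, Matrix.det_one]
  have hrhs : f (X ^ (q - 1) * (X - 1) ^ (p - 1) * (X ^ 2 - X - C ((p : ℝ) * q)))
      = (f X) ^ (q - 1) * (f X - 1) ^ (p - 1)
        * ((f X) ^ 2 - f X - (p : RatFunc ℝ) * (q : RatFunc ℝ)) := by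
    have hc : (C ((p : ℝ) * q) : ℝ[X]) = (p : ℝ[X]) * (q : ℝ[X]) := by
      rw [_root_.map_mul, map_natCast, map_natCast]
    rw [hc]
    simp only [_root_.map_mul, map_pow, _root_.map_sub, _root_.map_one, map_natCast]
  rw [hrhs]
  have hq' : (f X) ^ q = (f X) ^ (q - 1) * f X := by
    conv_lhs => rw [← Nat.sub_add_cancel hq, pow_succ]
  rw [Fintype.card_fin, hq']
  field_simp
  ring
end

section
/- For all integers t, m ≥ 1 and k ∈ {1, −1}, setting p₁ = (5t−2)²m + k(5t−2), q₁ = m, p₂ = 5t²m + kt, q₂ = 5(2t−1)²m + k(4t−2), one has p₁ + q₁ = p₂ + q₂ and (p₁ − 1 + √(1+4p₁q₁)) = (p₂ − 1 + √(1+4p₂q₂)). -/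
theorem equienergetic_splitting (t m : ℕ) (ht : 1 ≤ t) (hm : 1 ≤ m) (k : ℤ)
    (hk : k = 1 ∨ k = -1) :
    ((5 * (t : ℝ) - 2) ^ 2 * m + k * (5 * t - 2)) + (m : ℝ) =
      (5 * (t : ℝ) ^ 2 * m + k * t) + (5 * (2 * (t : ℝ) - 1) ^ 2 * m + k * (4 * t - 2)) ∧
    ((5 * (t : ℝ) - 2) ^ 2 * m + k * (5 * t - 2)) - 1 +
        Real.sqrt (1 + 4 * ((5 * (t : ℝ) - 2) ^ 2 * m + k * (5 * t - 2)) * m) =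
      (5 * (t : ℝ) ^ 2 * m + k * t) - 1 +
        Real.sqrt (1 + 4 * (5 * (t : ℝ) ^ 2 * m + k * t) *
          (5 * (2 * (t : ℝ) - 1) ^ 2 * m + k * (4 * t - 2))) := by
  have htR : (1 : ℝ) ≤ (t : ℝ) := by exact_mod_cast ht
  have hmR : (1 : ℝ) ≤ (m : ℝ) := by exact_mod_cast hm
  constructor
  · ring
  · have hk2 : (k : ℝ) = 1 ∨ (k : ℝ) = -1 := by
      rcases hk with h | h <;> [left; right] <;> exact_mod_cast h
    rcases hk2 with h | h <;> rw [h]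
    · rw [show (1 : ℝ) + 4 * ((5 * (t : ℝ) - 2) ^ 2 * m + 1 * (5 * t - 2)) * m
          = (2 * (5 * (t : ℝ) - 2) * m + 1) ^ 2 from by ring,
        show (1 : ℝ) + 4 * (5 * (t : ℝ) ^ 2 * m + 1 * t) *
            (5 * (2 * (t : ℝ) - 1) ^ 2 * m + 1 * (4 * t - 2))
          = (10 * (t : ℝ) * (2 * t - 1) * m + (4 * t - 1)) ^ 2 from by ring,
        Real.sqrt_sq (by nlinarith), Real.sqrt_sq (by nlinarith [mul_nonneg (sub_nonneg.2 htR) (sub_nonneg.2 hmR), mul_nonneg (mul_nonneg (sub_nonneg.2 htR) (sub_nonneg.2 htR)) (sub_nonneg.2 hmR), mul_nonneg (sub_nonneg.2 htR) (sub_nonneg.2 htR)])]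
      ring
    · rw [show (1 : ℝ) + 4 * ((5 * (t : ℝ) - 2) ^ 2 * m + (-1) * (5 * t - 2)) * m
          = (2 * (5 * (t : ℝ) - 2) * m - 1) ^ 2 from by ring,
        show (1 : ℝ) + 4 * (5 * (t : ℝ) ^ 2 * m + (-1) * t) *
            (5 * (2 * (t : ℝ) - 1) ^ 2 * m + (-1) * (4 * t - 2))
          = (10 * (t : ℝ) * (2 * t - 1) * m - (4 * t - 1)) ^ 2 from by ring,
        Real.sqrt_sq (by nlinarith), Real.sqrt_sq (by nlinarith [mul_nonneg (sub_nonneg.2 htR) (sub_nonneg.2 hmR), mul_nonneg (mul_nonneg (sub_nonneg.2 htR) (sub_nonneg.2 htR)) (sub_nonneg.2 hmR), mul_nonneg (sub_nonneg.2 htR) (sub_nonneg.2 htR)])]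
      ring
end
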